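/- Let (Z_j)_{j≥0} be i.i.d. ℝ^d-valued random vectors whose common characteristic function is θ ↦ exp(−∫_{S^{d−1}} |⟨θ, x⟩|^α Π(dx)) for some α ∈ (0,2) and finite symmetric measure Π on the unit sphere S^{d−1}, and let P ∈ ℝ^{d×d} with ρ(P) < 1. Then the a.s. convergent series Z := ∑_{j=0}^∞ P^j Z_j has characteristic function E[exp(i⟨θ, Z⟩)] = exp(−∫_{S^{d−1}} ∑_{j=0}^∞ |⟨(P^j)^⊤ θ, x⟩|^α Π(dx)) for all θ ∈ ℝ^d. -/

import Mathlib

open MeasureTheory ProbabilityTheory Matrix Filter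

/-- The spectral radius of a real `d × d` matrix: the supremum of the moduli of its complex
eigenvalues. -/
noncomputable def specRad {d : ℕ} (P : Matrix (Fin d) (Fin d) ℝ) : ℝ :=
  sSup ((fun z : ℂ => ‖z‖) '' spectrum ℂ (P.map (algebraMap ℝ ℂ)))

/-- A real `d × d` matrix acting on Euclidean space. -/
noncomputable def mApp {d : ℕ} (P : Matrix (Fin d) (Fin d) ℝ)
    (x : EuclideanSpace ℝ (Fin d)) : EuclideanSpace ℝ (Fin d) :=
  Matrix.toEuclideanCLM (𝕜 := ℝ) P x

/-- `log⁺ x = max (log x) 0`. -/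
noncomputable def logPlus (x : ℝ) : ℝ := max (Real.log x) 0

open scoped RealInnerProductSpace

/-!
Gelfand's formula turns `specRad P < 1` into `‖P ^ j‖ ≤ r ^ j` for large `j`, for some `r < 1`.
Along each line `t • a` the characteristic function `exp (-∫ |⟪θ, x⟫| ^ α dΠ)` is within
`O(|t| ^ α)` of `1`, so the truncation inequality bounds `P(‖Z₀‖ > t)` by `O(t ^ (-α))`; by
Borel–Cantelli `‖Z j‖ ≤ r ^ (-j / 2)` eventually almost surely, and the series converges
absolutely. By independence the characteristic function of a partial sum is the product of the
`exp (-∫ |⟪(P ^ j)ᵀ θ, x⟫| ^ α dΠ)`, and dominated convergence (on `Ω` for the partial sums, on the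
sphere for the exponents, which decay like `r ^ (j α)`) passes to the limit on both sides.
-/

open Topology

theorem eventually_norm_pow_le_of_spectralRadius_lt {A : Type*} [NormedRing A]
    [NormedAlgebra ℂ A] [CompleteSpace A] {a : A} {r : ℝ}
    (h : spectralRadius ℂ a < ENNReal.ofReal r) : ∀ᶠ n in atTop, ‖a ^ n‖ ≤ r ^ n := by
  have hr : 0 < r := ENNReal.ofReal_pos.mp (pos_of_gt h)
  filter_upwards [(spectrum.pow_norm_pow_one_div_tendsto_nhds_spectralRadius a).eventually_lt_const
    h, eventually_ge_atTop 1] with n hn hn1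
  rw [ENNReal.ofReal_lt_ofReal_iff hr, one_div,
    Real.rpow_inv_lt_iff_of_pos (norm_nonneg _) hr.le (by positivity), Real.rpow_natCast] at hn
  exact hn.le

section Matrix

variable {n : Type*} [Fintype n] [DecidableEq n]

theorem norm_toEuclideanCLM_le_norm_toEuclideanCLM_map_ofReal (Q : Matrix n n ℝ) :
    ‖toEuclideanCLM (𝕜 := ℝ) Q‖ ≤ ‖toEuclideanCLM (𝕜 := ℂ) (Q.map (algebraMap ℝ ℂ))‖ := by
  let ofReal : EuclideanSpace ℝ n → EuclideanSpace ℂ n := fun y => WithLp.toLp 2 fun i => (y i : ℂ)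
  have norm_ofReal (y : EuclideanSpace ℝ n) : ‖ofReal y‖ = ‖y‖ := by
    simp [ofReal, EuclideanSpace.norm_eq]
  refine ContinuousLinearMap.opNorm_le_bound _ (norm_nonneg _) fun x => ?_
  have ofReal_apply : toEuclideanCLM (𝕜 := ℂ) (Q.map (algebraMap ℝ ℂ)) (ofReal x) =
      ofReal (toEuclideanCLM (𝕜 := ℝ) Q x) := by
    ext i
    simp [ofReal, mulVec, dotProduct]
  rw [← norm_ofReal, ← ofReal_apply, ← norm_ofReal x]
  exact ContinuousLinearMap.le_opNorm _ _

theorem spectralRadius_map_ofReal_le_specRad {d : ℕ} (P : Matrix (Fin d) (Fin d) ℝ) :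
    spectralRadius ℂ (P.map (algebraMap ℝ ℂ)) ≤ ENNReal.ofReal (specRad P) := by
  refine iSup₂_le fun z hz => ?_
  rw [← enorm_eq_nnnorm, ← ofReal_norm]
  exact ENNReal.ofReal_le_ofReal <|
    le_csSup ((Matrix.finite_spectrum _).image _).bddAbove ⟨z, hz, rfl⟩

theorem exists_eventually_norm_toEuclideanCLM_pow_le {d : ℕ} {P : Matrix (Fin d) (Fin d) ℝ}
    (hP : specRad P < 1) :
    ∃ r, 0 < r ∧ r < 1 ∧ ∀ᶠ j in atTop, ‖toEuclideanCLM (n := Fin d) (𝕜 := ℝ) (P ^ j)‖ ≤ r ^ j := by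
  obtain ⟨r, hPr, hr1⟩ := exists_between (max_lt hP one_pos)
  have hr0 : 0 < r := (le_max_right _ _).trans_lt hPr
  refine ⟨r, hr0, hr1, ?_⟩
  set Pc := P.map (algebraMap ℝ ℂ)
  have hρ : spectralRadius ℂ (toEuclideanCLM (𝕜 := ℂ) Pc) < ENNReal.ofReal r := by
    rw [spectralRadius, AlgEquiv.spectrum_eq (toEuclideanCLM (n := Fin d) (𝕜 := ℂ)) Pc]
    exact (spectralRadius_map_ofReal_le_specRad P).trans_lt <|
      (ENNReal.ofReal_lt_ofReal_iff hr0).2 ((le_max_left _ _).trans_lt hPr)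
  filter_upwards [eventually_norm_pow_le_of_spectralRadius_lt hρ] with j hj
  calc ‖toEuclideanCLM (𝕜 := ℝ) (P ^ j)‖
      ≤ ‖toEuclideanCLM (𝕜 := ℂ) ((P ^ j).map (algebraMap ℝ ℂ))‖ :=
        norm_toEuclideanCLM_le_norm_toEuclideanCLM_map_ofReal _
    _ ≤ r ^ j := by rwa [Matrix.map_pow, map_pow]

theorem toEuclideanCLM_transpose (Q : Matrix n n ℝ) :
    toEuclideanCLM (n := n) (𝕜 := ℝ) Qᵀ = (toEuclideanCLM (n := n) (𝕜 := ℝ) Q).adjoint := by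
  rw [← ContinuousLinearMap.star_eq_adjoint, ← map_star, star_eq_conjTranspose,
    conjTranspose_eq_transpose_of_trivial]

end Matrix

theorem summable_norm_mApp_transpose_pow_rpow {d : ℕ} {P : Matrix (Fin d) (Fin d) ℝ} {r α : ℝ}
    (hr0 : 0 < r) (hr1 : r < 1)
    (hPr : ∀ᶠ j in atTop, ‖toEuclideanCLM (n := Fin d) (𝕜 := ℝ) (P ^ j)‖ ≤ r ^ j) (hα : 0 < α)
    (θ : EuclideanSpace ℝ (Fin d)) : Summable fun j => ‖mApp (P ^ j)ᵀ θ‖ ^ α := by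
  refine .of_norm_bounded_eventually_nat ((summable_geometric_of_lt_one (by positivity)
    (Real.rpow_lt_one hr0.le hr1 hα)).mul_left (‖θ‖ ^ α)) (hPr.mono fun j hj => ?_)
  have hle : ‖mApp (P ^ j)ᵀ θ‖ ≤ ‖θ‖ * r ^ j := by
    rw [mApp, toEuclideanCLM_transpose, mul_comm]
    refine (ContinuousLinearMap.le_opNorm _ θ).trans ?_
    rw [LinearIsometryEquiv.norm_map]
    gcongr
  rw [Real.norm_of_nonneg (by positivity), Real.rpow_pow_comm hr0.le,
    ← Real.mul_rpow (norm_nonneg _) (by positivity)]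
  gcongr

section Tail

variable {E : Type*} [NormedAddCommGroup E] [InnerProductSpace ℝ E] [MeasurableSpace E]
  {ν : Measure E}

theorem measureReal_abs_inner_gt_le_of_norm_one_sub_charFun_le [OpensMeasurableSpace E]
    [IsProbabilityMeasure ν] {a : E} {α c : ℝ}
    (hα : 0 ≤ α) (hc : 0 ≤ c) (h : ∀ t : ℝ, ‖1 - charFun ν (t • a)‖ ≤ c * |t| ^ α)
    {s : ℝ} (hs : 0 < s) : ν.real {x | s < |⟪a, x⟫|} ≤ 2 * c * (2 / s) ^ α := by
  have hbound : ∀ t ∈ Set.uIoc (-2 * s⁻¹) (2 * s⁻¹),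
      ‖1 - charFun ν (t • a)‖ ≤ c * (2 / s) ^ α := by
    intro t ht
    have ht' : |t| ≤ 2 / s := by
      rw [Set.uIoc_of_le (by nlinarith [inv_pos.2 hs])] at ht
      rw [abs_le, div_eq_mul_inv]
      exact ⟨by linarith [ht.1], ht.2⟩
    exact (h t).trans (by gcongr)
  calc ν.real {x | s < |⟪a, x⟫|}
      ≤ 2⁻¹ * s * ‖∫ t in -2 * s⁻¹..2 * s⁻¹, 1 - charFun ν (t • a)‖ :=
        measureReal_abs_inner_gt_le_integral_charFun hs
    _ ≤ 2⁻¹ * s * (c * (2 / s) ^ α * |2 * s⁻¹ - -2 * s⁻¹|) := by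
        gcongr
        exact intervalIntegral.norm_integral_le_of_norm_le_const hbound
    _ = 2 * c * (2 / s) ^ α := by
        rw [show 2 * s⁻¹ - -2 * s⁻¹ = 4 / s by ring, abs_of_pos (by positivity)]
        field_simp
        ring

theorem measureReal_norm_gt_le_sum_abs_inner [IsFiniteMeasure ν] {ι : Type*} [Fintype ι]
    (b : OrthonormalBasis ι ℝ E) {t : ℝ} (ht : 0 ≤ t) :
    ν.real {x | t < ‖x‖} ≤ ∑ i, ν.real {x | t / Fintype.card ι < |⟪b i, x⟫|} := by
  refine (measureReal_mono fun x hx => ?_).trans (measureReal_iUnion_fintype_le _)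
  by_contra hcon
  simp only [Set.mem_iUnion, Set.mem_ofPred_eq, not_exists, not_lt] at hcon
  rw [Set.mem_ofPred_eq] at hx
  refine hx.not_ge ?_
  calc ‖x‖ = ‖∑ i, ⟪b i, x⟫ • b i‖ := by rw [b.sum_repr']
    _ ≤ ∑ i, |⟪b i, x⟫| := by
        refine (norm_sum_le _ _).trans (le_of_eq (Finset.sum_congr rfl fun i _ => ?_))
        rw [norm_smul, b.orthonormal.1 i, mul_one, Real.norm_eq_abs]
    _ ≤ ∑ _i : ι, t / Fintype.card ι := Finset.sum_le_sum fun i _ => hcon i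
    _ ≤ t := by
        rw [Finset.sum_const, Finset.card_univ, nsmul_eq_mul]
        rcases (Fintype.card ι).eq_zero_or_pos with h0 | hpos
        · simp [h0, ht]
        · rw [mul_div_cancel₀ _ (by positivity)]

theorem exists_measureReal_norm_gt_le_rpow [OpensMeasurableSpace E] [IsProbabilityMeasure ν]
    [FiniteDimensional ℝ E] {α : ℝ} (hα : 0 ≤ α) {c : E → ℝ} (hc : ∀ a, 0 ≤ c a)
    (h : ∀ (a : E) (t : ℝ), ‖1 - charFun ν (t • a)‖ ≤ c a * |t| ^ α) :
    ∃ K, ∀ t > 0, ν.real {x | t < ‖x‖} ≤ K * t ^ (-α) := by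
  let b := stdOrthonormalBasis ℝ E
  let n : ℝ := Fintype.card (Fin (Module.finrank ℝ E))
  refine ⟨∑ i, 2 * c (b i) * (2 * n) ^ α, fun t ht => ?_⟩
  refine (measureReal_norm_gt_le_sum_abs_inner b ht.le).trans ?_
  rw [Finset.sum_mul]
  gcongr with i
  have hn : 0 < n := Nat.cast_pos.2 (Fintype.card_pos_iff.2 ⟨i⟩)
  calc _ ≤ 2 * c (b i) * (2 / (t / n)) ^ α :=
        measureReal_abs_inner_gt_le_of_norm_one_sub_charFun_le hα (hc _) (h _) (by positivity)
    _ = 2 * c (b i) * (2 * n) ^ α * t ^ (-α) := by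
        rw [div_div_eq_mul_div, Real.div_rpow (by positivity) ht.le, Real.rpow_neg ht.le]
        ring

end Tail

theorem ae_eventually_norm_le_pow {Ω E : Type*} [MeasurableSpace Ω] {μ : Measure Ω}
    [IsFiniteMeasure μ] [NormedAddCommGroup E] [MeasurableSpace E] [OpensMeasurableSpace E]
    {X : ℕ → Ω → E} (hident : ∀ j, IdentDistrib (X j) (X 0) μ μ) {K α s : ℝ} (hα : 0 < α)
    (hs : 1 < s) (htail : ∀ t > 0, (μ.map (X 0)).real {x | t < ‖x‖} ≤ K * t ^ (-α)) :
    ∀ᵐ ω ∂μ, ∀ᶠ j in atTop, ‖X j ω‖ ≤ s ^ j := by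
  let S : ℕ → Set E := fun j => {x | s ^ j < ‖x‖}
  have hS : ∀ j, MeasurableSet (S j) := fun j => measurableSet_lt measurable_const measurable_norm
  have hprob : ∀ j, μ (X j ⁻¹' S j) = ENNReal.ofReal ((μ.map (X 0)).real (S j)) := fun j => by
    rw [ofReal_measureReal, ← (hident j).map_eq,
      Measure.map_apply_of_aemeasurable (hident j).aemeasurable_fst (hS j)]
  have hsummable : Summable fun j => (μ.map (X 0)).real (S j) := by
    refine Summable.of_nonneg_of_le (fun _ => measureReal_nonneg) (fun j => ?_)
      ((summable_geometric_of_lt_one (by positivity)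
        (Real.rpow_lt_one_of_one_lt_of_neg hs (neg_neg_of_pos hα))).mul_left K)
    rw [Real.rpow_pow_comm (by positivity)]
    exact htail _ (by positivity)
  have hfin : ∑' j, μ (X j ⁻¹' S j) ≠ ⊤ := by
    simp only [hprob]
    rw [← ENNReal.ofReal_tsum_of_nonneg (fun _ => measureReal_nonneg) hsummable]
    exact ENNReal.ofReal_ne_top
  filter_upwards [ae_eventually_notMem hfin] with ω hω
  filter_upwards [hω] with j hj
  simpa [S] using hj

theorem ae_summable_of_eventually_norm_le_pow {Ω E F : Type*} [MeasurableSpace Ω]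
    {μ : Measure Ω} [IsFiniteMeasure μ] [NormedAddCommGroup E] [MeasurableSpace E]
    [OpensMeasurableSpace E] [NormedAddCommGroup F] [CompleteSpace F]
    {A : ℕ → E → F} {r : ℝ} (hr0 : 0 < r) (hr1 : r < 1)
    (hA : ∀ᶠ j in atTop, ∀ x, ‖A j x‖ ≤ r ^ j * ‖x‖)
    {X : ℕ → Ω → E} (hident : ∀ j, IdentDistrib (X j) (X 0) μ μ) {K α : ℝ} (hα : 0 < α)
    (htail : ∀ t > 0, (μ.map (X 0)).real {x | t < ‖x‖} ≤ K * t ^ (-α)) :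
    ∀ᵐ ω ∂μ, Summable fun j => A j (X j ω) := by
  have hsqrt0 : 0 < √r := Real.sqrt_pos.2 hr0
  have hsqrt1 : √r < 1 := (Real.sqrt_lt' one_pos).2 (by rwa [one_pow])
  filter_upwards [ae_eventually_norm_le_pow hident hα (one_lt_inv₀ hsqrt0 |>.2 hsqrt1) htail]
    with ω hω
  refine .of_norm_bounded_eventually_nat (summable_geometric_of_lt_one hsqrt0.le hsqrt1) ?_
  filter_upwards [hA, hω] with j hAj hXj
  calc ‖A j (X j ω)‖ ≤ r ^ j * ‖X j ω‖ := hAj _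
    _ ≤ r ^ j * (√r)⁻¹ ^ j := by gcongr
    _ = √r ^ j := by
        rw [← mul_pow, ← div_eq_mul_inv, Real.div_sqrt]

section CharFun

variable {Ω E : Type*} [MeasurableSpace Ω] {μ : Measure Ω} [NormedAddCommGroup E]
  [InnerProductSpace ℝ E] [MeasurableSpace E] [BorelSpace E] [SecondCountableTopology E]

theorem integral_cexp_I_mul_inner_eq_charFun {X : Ω → E} (hX : AEMeasurable X μ) (θ : E) :
    ∫ ω, Complex.exp (Complex.I * (⟪θ, X ω⟫ : ℝ)) ∂μ = charFun (μ.map X) θ := by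
  rw [charFun_apply, integral_map hX (by fun_prop)]
  simp only [real_inner_comm θ, mul_comm Complex.I]

theorem charFun_map_continuousLinearMap [CompleteSpace E] {ν : Measure E}
    (A : E →L[ℝ] E) (θ : E) : charFun (ν.map A) θ = charFun ν (A.adjoint θ) := by
  rw [charFun_apply, charFun_apply, integral_map A.continuous.aemeasurable (by fun_prop)]
  simp only [ContinuousLinearMap.adjoint_inner_right]

theorem charFun_map_sum_range_of_iIndepFun [IsProbabilityMeasure μ] [CompleteSpace E]
    {X : ℕ → Ω → E} (hX : ∀ j, Measurable (X j))
    (hindep : iIndepFun X μ) (hident : ∀ j, IdentDistrib (X j) (X 0) μ μ)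
    (A : ℕ → E →L[ℝ] E) (n : ℕ) (θ : E) :
    charFun (μ.map fun ω => ∑ j ∈ Finset.range n, A j (X j ω)) θ =
      ∏ j ∈ Finset.range n, charFun (μ.map (X 0)) ((A j).adjoint θ) := by
  have hAX : iIndepFun (fun j ω => A j (X j ω)) μ :=
    hindep.comp (fun j => A j) fun j => (A j).continuous.measurable
  rw [iIndepFun.charFun_map_fun_finsetSum_eq_prod (X := fun j ω => A j (X j ω))
    (fun j _ => ((A j).continuous.measurable.comp (hX j)).aemeasurable) (hAX.restrict _),
    Finset.prod_apply]
  refine Finset.prod_congr rfl fun j _ => ?_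
  rw [← Function.comp_def, ← Measure.map_map (A j).continuous.measurable (hX j), (hident j).map_eq,
    charFun_map_continuousLinearMap]

theorem tendsto_integral_cexp_I_mul_inner_sum_range {Y : ℕ → Ω → E}
    [IsFiniteMeasure μ] (hY : ∀ j, AEMeasurable (Y j) μ)
    (hsum : ∀ᵐ ω ∂μ, Summable fun j => Y j ω) (θ : E) :
    Tendsto (fun n => ∫ ω, Complex.exp (Complex.I * (⟪θ, ∑ j ∈ Finset.range n, Y j ω⟫ : ℝ)) ∂μ)
      atTop (𝓝 (∫ ω, Complex.exp (Complex.I * (⟪θ, ∑' j, Y j ω⟫ : ℝ)) ∂μ)) := by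
  have hcont : Continuous fun y : E => Complex.exp (Complex.I * (⟪θ, y⟫ : ℝ)) := by fun_prop
  refine tendsto_integral_of_dominated_convergence (fun _ => 1) (fun n => ?_)
    (integrable_const 1) (fun n => ae_of_all _ fun ω => ?_) ?_
  · exact hcont.comp_aestronglyMeasurable
      (Finset.aemeasurable_fun_sum _ fun j _ => hY j).aestronglyMeasurable
  · rw [mul_comm, Complex.norm_exp_ofReal_mul_I]
  · filter_upwards [hsum] with ω hω
    exact (hcont.tendsto _).comp hω.hasSum.tendsto_sum_nat

end CharFun

theorem norm_one_sub_cexp_neg_ofReal_le {y : ℝ} (hy : 0 ≤ y) :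
    ‖1 - Complex.exp (-(y : ℂ))‖ ≤ y := by
  rw [← Complex.ofReal_neg, ← Complex.ofReal_exp, ← Complex.ofReal_one, ← Complex.ofReal_sub,
    Complex.norm_real, Real.norm_of_nonneg (sub_nonneg.2 (Real.exp_le_one_iff.2 (by linarith)))]
  linarith [Real.add_one_le_exp (-y)]

section StableExponent

variable {E : Type*} [NormedAddCommGroup E] [InnerProductSpace ℝ E]

theorem abs_inner_rpow_le_of_norm_le_one {α : ℝ} (hα : 0 ≤ α) (θ : E) {x : E} (hx : ‖x‖ ≤ 1) :
    |⟪θ, x⟫| ^ α ≤ ‖θ‖ ^ α := by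
  gcongr
  exact (abs_real_inner_le_norm θ x).trans (mul_le_of_le_one_right (norm_nonneg θ) hx)

variable [MeasurableSpace E]

/-- `θ ↦ ∫ |⟪θ, x⟫| ^ α dΛ(x)`: a symmetric `α`-stable law with spectral measure `Λ` has
characteristic function `θ ↦ exp (-stableExponent Λ α θ)`. -/
noncomputable def stableExponent (Λ : Measure E) (α : ℝ) (θ : E) : ℝ :=
  ∫ x, |⟪θ, x⟫| ^ α ∂Λ

variable {Λ : Measure E} {α : ℝ}

theorem stableExponent_nonneg (θ : E) : 0 ≤ stableExponent Λ α θ :=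
  integral_nonneg fun _ => by positivity

theorem stableExponent_smul (t : ℝ) (θ : E) :
    stableExponent Λ α (t • θ) = |t| ^ α * stableExponent Λ α θ := by
  simp only [stableExponent, real_inner_smul_left, abs_mul,
    Real.mul_rpow (abs_nonneg _) (abs_nonneg _), integral_const_mul]

theorem norm_one_sub_charFun_smul_le {ν : Measure E}
    (hν : ∀ θ, charFun ν θ = Complex.exp (-(stableExponent Λ α θ : ℂ))) (a : E) (t : ℝ) :
    ‖1 - charFun ν (t • a)‖ ≤ stableExponent Λ α a * |t| ^ α := by
  rw [hν, stableExponent_smul, mul_comm]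
  exact norm_one_sub_cexp_neg_ofReal_le (mul_nonneg (stableExponent_nonneg a) (by positivity))

variable [IsFiniteMeasure Λ]

theorem integrable_abs_inner_rpow [OpensMeasurableSpace E] (hΛ : ∀ᵐ x ∂Λ, ‖x‖ ≤ 1)
    (hα : 0 ≤ α) (θ : E) : Integrable (fun x => |⟪θ, x⟫| ^ α) Λ := by
  refine (integrable_const (‖θ‖ ^ α)).mono' (by fun_prop) ?_
  filter_upwards [hΛ] with x hx
  rw [Real.norm_of_nonneg (by positivity)]
  exact abs_inner_rpow_le_of_norm_le_one hα θ hx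

theorem stableExponent_le (hΛ : ∀ᵐ x ∂Λ, ‖x‖ ≤ 1) (hα : 0 ≤ α) (θ : E) :
    stableExponent Λ α θ ≤ ‖θ‖ ^ α * Λ.real Set.univ := by
  calc stableExponent Λ α θ ≤ ∫ _, ‖θ‖ ^ α ∂Λ :=
        integral_mono_of_nonneg (ae_of_all _ fun _ => by positivity) (integrable_const _)
          (hΛ.mono fun x hx => abs_inner_rpow_le_of_norm_le_one hα θ hx)
    _ = ‖θ‖ ^ α * Λ.real Set.univ := by rw [integral_const, smul_eq_mul, mul_comm]

theorem hasSum_stableExponent [OpensMeasurableSpace E] (hΛ : ∀ᵐ x ∂Λ, ‖x‖ ≤ 1) (hα : 0 ≤ α)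
    {v : ℕ → E} (hv : Summable fun j => ‖v j‖ ^ α) :
    HasSum (fun j => stableExponent Λ α (v j)) (∫ x, ∑' j, |⟪v j, x⟫| ^ α ∂Λ) := by
  have hsummable : Summable fun j => stableExponent Λ α (v j) :=
    (hv.mul_right (Λ.real Set.univ)).of_nonneg_of_le (fun j => stableExponent_nonneg _)
      fun j => stableExponent_le hΛ hα _
  rw [← integral_tsum_of_summable_integral_norm (fun j => integrable_abs_inner_rpow hΛ hα (v j))]
  · exact hsummable.hasSum
  · simpa only [Real.norm_of_nonneg (Real.rpow_nonneg (abs_nonneg _) _), stableExponent]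
      using hsummable

end StableExponent

theorem measurable_mApp {d : ℕ} (Q : Matrix (Fin d) (Fin d) ℝ) : Measurable (mApp Q) :=
  (toEuclideanCLM (𝕜 := ℝ) Q).continuous.measurable

section Series

variable {d : ℕ} {Ω : Type*} [MeasurableSpace Ω] {μ : Measure Ω} [IsProbabilityMeasure μ]
  {Z : ℕ → Ω → EuclideanSpace ℝ (Fin d)} {Λ : Measure (EuclideanSpace ℝ (Fin d))} {α : ℝ}
  {P : Matrix (Fin d) (Fin d) ℝ}

theorem ae_summable_mApp_pow (hident : ∀ j, IdentDistrib (Z j) (Z 0) μ μ) (hα : 0 < α)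
    (hZ : ∀ θ, charFun (μ.map (Z 0)) θ = Complex.exp (-(stableExponent Λ α θ : ℂ)))
    {r : ℝ} (hr0 : 0 < r) (hr1 : r < 1)
    (hPr : ∀ᶠ j in atTop, ‖toEuclideanCLM (n := Fin d) (𝕜 := ℝ) (P ^ j)‖ ≤ r ^ j) :
    ∀ᵐ ω ∂μ, Summable fun j => mApp (P ^ j) (Z j ω) := by
  have : IsProbabilityMeasure (μ.map (Z 0)) :=
    Measure.isProbabilityMeasure_map (hident 0).aemeasurable_fst
  obtain ⟨K, htail⟩ := exists_measureReal_norm_gt_le_rpow hα.le stableExponent_nonneg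
    (norm_one_sub_charFun_smul_le hZ)
  exact ae_summable_of_eventually_norm_le_pow hr0 hr1
    (hPr.mono fun j hj x => (ContinuousLinearMap.le_opNorm _ x).trans (by gcongr)) hident hα htail

theorem integral_cexp_I_mul_inner_sum_mApp_pow (hmeas : ∀ j, Measurable (Z j))
    (hindep : iIndepFun Z μ) (hident : ∀ j, IdentDistrib (Z j) (Z 0) μ μ)
    (hZ : ∀ θ, charFun (μ.map (Z 0)) θ = Complex.exp (-(stableExponent Λ α θ : ℂ)))
    (θ : EuclideanSpace ℝ (Fin d)) (n : ℕ) :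
    ∫ ω, Complex.exp (Complex.I * (⟪θ, ∑ j ∈ Finset.range n, mApp (P ^ j) (Z j ω)⟫ : ℝ)) ∂μ =
      Complex.exp (-(∑ j ∈ Finset.range n, stableExponent Λ α (mApp (P ^ j)ᵀ θ) : ℝ)) := by
  rw [integral_cexp_I_mul_inner_eq_charFun
    (X := fun ω => ∑ j ∈ Finset.range n, mApp (P ^ j) (Z j ω)) (Finset.aemeasurable_fun_sum _ fun j _ => ((measurable_mApp _).comp (hmeas j)).aemeasurable)]
  refine (charFun_map_sum_range_of_iIndepFun hmeas hindep hident
    (fun j => toEuclideanCLM (𝕜 := ℝ) (P ^ j)) n θ).trans ?_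
  simp only [← toEuclideanCLM_transpose, hZ, ← Complex.exp_sum, Complex.ofReal_sum,
    Finset.sum_neg_distrib]
  rfl

end Series

theorem charFun_series_symmetric_stable_general {d : ℕ} {Ω : Type*} [MeasurableSpace Ω]
    (μ : Measure Ω) [IsProbabilityMeasure μ]
    (Z : ℕ → Ω → EuclideanSpace ℝ (Fin d)) (hmeas : ∀ j, Measurable (Z j))
    (hindep : iIndepFun Z μ)
    (hident : ∀ j, IdentDistrib (Z j) (Z 0) μ μ)
    (α : ℝ) (hα0 : 0 < α)
    (Pi0 : Measure (EuclideanSpace ℝ (Fin d))) [IsFiniteMeasure Pi0]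
    (hsphere : Pi0 (Metric.sphere (0 : EuclideanSpace ℝ (Fin d)) 1)ᶜ = 0)
    (hstable : ∀ θ : EuclideanSpace ℝ (Fin d),
      ∫ ω, Complex.exp (Complex.I * (⟪θ, Z 0 ω⟫ : ℝ)) ∂μ =
        Complex.exp (-((∫ x, |⟪θ, x⟫| ^ α ∂Pi0 : ℝ) : ℂ)))
    (P : Matrix (Fin d) (Fin d) ℝ) (hP : specRad P < 1) :
    (∀ᵐ ω ∂μ, Summable fun j : ℕ => mApp (P ^ j) (Z j ω)) ∧
    ∀ θ : EuclideanSpace ℝ (Fin d),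
      ∫ ω, Complex.exp (Complex.I * (⟪θ, ∑' j : ℕ, mApp (P ^ j) (Z j ω)⟫ : ℝ)) ∂μ =
        Complex.exp
          (-((∫ x, ∑' j : ℕ, |⟪mApp (P ^ j)ᵀ θ, x⟫| ^ α ∂Pi0 : ℝ) : ℂ)) := by
  obtain ⟨r, hr0, hr1, hPr⟩ := exists_eventually_norm_toEuclideanCLM_pow_le hP
  have hunit : ∀ᵐ x ∂Pi0, ‖x‖ ≤ 1 :=
    measure_eq_zero_iff_ae_notMem.1 hsphere |>.mono fun x hx => (by simpa using hx : ‖x‖ = 1).le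
  have hZ0 : ∀ θ, charFun (μ.map (Z 0)) θ = Complex.exp (-(stableExponent Pi0 α θ : ℂ)) :=
    fun θ => by rw [← integral_cexp_I_mul_inner_eq_charFun (hmeas 0).aemeasurable, hstable]; rfl
  have hsum := ae_summable_mApp_pow hident hα0 hZ0 hr0 hr1 hPr
  refine ⟨hsum, fun θ => ?_⟩
  have hexponent := hasSum_stableExponent hunit hα0.le
    (summable_norm_mApp_transpose_pow_rpow hr0 hr1 hPr hα0 θ)
  refine tendsto_nhds_unique (tendsto_integral_cexp_I_mul_inner_sum_range
    (fun j => ((measurable_mApp _).comp (hmeas j)).aemeasurable) hsum θ) ?_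
  simpa only [integral_cexp_I_mul_inner_sum_mApp_pow hmeas hindep hident hZ0, Function.comp_def]
    using ((by fun_prop : Continuous fun s : ℝ => Complex.exp (-(s : ℂ))).tendsto _).comp
      hexponent.tendsto_sum_nat

theorem charFun_series_symmetric_stable {d : ℕ} {Ω : Type*} [MeasurableSpace Ω]
    (μ : Measure Ω) [IsProbabilityMeasure μ]
    (Z : ℕ → Ω → EuclideanSpace ℝ (Fin d)) (hmeas : ∀ j, Measurable (Z j))
    (hindep : iIndepFun Z μ)
    (hident : ∀ j, IdentDistrib (Z j) (Z 0) μ μ)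
    (α : ℝ) (hα0 : 0 < α) (hα2 : α < 2)
    (Pi0 : Measure (EuclideanSpace ℝ (Fin d))) [IsFiniteMeasure Pi0]
    (hsphere : Pi0 (Metric.sphere (0 : EuclideanSpace ℝ (Fin d)) 1)ᶜ = 0)
    (hsymm : Measure.map (fun x => -x) Pi0 = Pi0)
    (hstable : ∀ θ : EuclideanSpace ℝ (Fin d),
      ∫ ω, Complex.exp (Complex.I * (⟪θ, Z 0 ω⟫ : ℝ)) ∂μ =
        Complex.exp (-((∫ x, |⟪θ, x⟫| ^ α ∂Pi0 : ℝ) : ℂ)))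
    (P : Matrix (Fin d) (Fin d) ℝ) (hP : specRad P < 1) :
    (∀ᵐ ω ∂μ, Summable fun j : ℕ => mApp (P ^ j) (Z j ω)) ∧
    ∀ θ : EuclideanSpace ℝ (Fin d),
      ∫ ω, Complex.exp (Complex.I * (⟪θ, ∑' j : ℕ, mApp (P ^ j) (Z j ω)⟫ : ℝ)) ∂μ =
        Complex.exp
          (-((∫ x, ∑' j : ℕ, |⟪mApp (P ^ j)ᵀ θ, x⟫| ^ α ∂Pi0 : ℝ) : ℂ)) :=
  charFun_series_symmetric_stable_general μ Z hmeas hindep hident α hα0 Pi0 hsphere hstable P hP
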